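/- arXiv:1707.07874 — 4 statements merged into one kernel-verified Lean document; each statement's English description precedes it below -/
import Mathlib

section
/- For every N ≥ 1 and all w, z ∈ ℝ^N: (i) ∫_{ℝ^N} |M(v−w) − M(v−z)| dv ≤ 2, and (ii) if |w−z| < 1 then ∫_{ℝ^N} |M(v−w) − M(v−z)| dv ≤ (|w−z| / (1 − |w−z|))^{1/2}. In other words, ‖M(·−w) − M(·−z)‖_{L¹(ℝ^N)} ≤ 2 ∧ (|w−z|/(1−|w−z|)^+)^{1/2}. -/
open MeasureTheory

/-- The standard Gaussian (Maxwellian) density on `ℝ^N`. -/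
noncomputable def gaussM (N : ℕ) (v : EuclideanSpace ℝ (Fin N)) : ℝ :=
  (2 * Real.pi) ^ (-(N : ℝ) / 2) * Real.exp (-‖v‖ ^ 2 / 2)

/-!
The `χ²`-divergence of `M(· - w)` from `M(· - z)` has a closed form: since
`M(u - a)² / M(u) = exp |a|² · M(u - 2a)`, it equals `exp |w - z|² - 1`. Integrating
`|f - g| ≤ (f - g)² / (2 t g) + t g / 2` and optimizing over `t > 0` bounds the `L¹` distance
between two densities by the square root of their `χ²`-divergence, and
`exp ε² - 1 ≤ exp ε - 1 ≤ ε / (1 - ε)` for `0 ≤ ε < 1`.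
-/

open Real RealInnerProductSpace

lemma abs_sub_le_sq_div_add {x y t : ℝ} (hy : 0 < y) (ht : 0 < t) :
    |x - y| ≤ (x - y) ^ 2 / y / (2 * t) + t / 2 * y := by
  have hsplit : (x - y) ^ 2 / y / (2 * t) + t / 2 * y
      = ((x - y) ^ 2 + (t * y) ^ 2) / (2 * t * y) := by
    field_simp
  rw [hsplit, le_div_iff₀ (by positivity)]
  nlinarith [sq_nonneg (|x - y| - t * y), sq_abs (x - y)]

lemma le_sqrt_of_forall_le_div_add {a b : ℝ} (h : ∀ t > 0, a ≤ b / (2 * t) + t / 2) :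
    a ≤ √b := by
  rcases le_or_gt a 0 with ha | ha
  · exact ha.trans (sqrt_nonneg b)
  apply le_sqrt_of_sq_le
  have := h a ha
  rw [div_add' _ _ _ (by positivity), le_div_iff₀ (by positivity)] at this
  nlinarith

lemma sq_sub_div_eq {x y : ℝ} (hy : y ≠ 0) : (x - y) ^ 2 / y = x ^ 2 / y - 2 * x + y := by
  field_simp
  ring

lemma exp_sq_sub_one_le_div_one_sub {ε : ℝ} (h0 : 0 ≤ ε) (h1 : ε < 1) :
    exp (ε ^ 2) - 1 ≤ ε / (1 - ε) := by
  have hsq : ε ^ 2 ≤ ε := by nlinarith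
  calc exp (ε ^ 2) - 1 ≤ 1 / (1 - ε) - 1 :=
        sub_le_sub_right ((exp_le_exp.2 hsq).trans (exp_bound_div_one_sub_of_interval h0 h1)) 1
    _ = ε / (1 - ε) := by field_simp [(sub_pos.2 h1).ne']; ring

section ChiSquare

variable {α : Type*} [MeasurableSpace α] {μ : Measure α} {f g : α → ℝ}

lemma integral_abs_sub_le_add (hf : 0 ≤ f) (hg : 0 ≤ g) (hfi : Integrable f μ)
    (hgi : Integrable g μ) : ∫ x, |f x - g x| ∂μ ≤ ∫ x, f x ∂μ + ∫ x, g x ∂μ := by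
  rw [← integral_add hfi hgi]
  refine integral_mono_of_nonneg (.of_forall fun x => abs_nonneg _) (hfi.add hgi)
    (.of_forall fun x => ?_)
  simpa [abs_of_nonneg (hf x), abs_of_nonneg (hg x)] using abs_sub (f x) (g x)

lemma integral_abs_sub_le_sqrt_chiSq (hg : ∀ᵐ x ∂μ, 0 < g x) (hg1 : ∫ x, g x ∂μ = 1)
    (hχ : Integrable (fun x => (f x - g x) ^ 2 / g x) μ) :
    ∫ x, |f x - g x| ∂μ ≤ √(∫ x, (f x - g x) ^ 2 / g x ∂μ) := by
  refine le_sqrt_of_forall_le_div_add fun t ht => ?_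
  have hgi : Integrable g μ := integrable_of_integral_eq_one hg1
  calc ∫ x, |f x - g x| ∂μ
      ≤ ∫ x, ((f x - g x) ^ 2 / g x / (2 * t) + t / 2 * g x) ∂μ := by
        refine integral_mono_of_nonneg (.of_forall fun x => abs_nonneg _)
          ((hχ.div_const _).add (hgi.const_mul _)) ?_
        filter_upwards [hg] with x hx using abs_sub_le_sq_div_add hx ht
    _ = (∫ x, (f x - g x) ^ 2 / g x ∂μ) / (2 * t) + t / 2 := by
        rw [integral_add (hχ.div_const _) (hgi.const_mul _), integral_div, integral_const_mul,
          hg1, mul_one]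

end ChiSquare

section Maxwellian

variable (N : ℕ)

lemma gaussM_pos (v : EuclideanSpace ℝ (Fin N)) : 0 < gaussM N v := by
  unfold gaussM; positivity

lemma integral_gaussM : ∫ v, gaussM N v = 1 := by
  have hexp : ∀ v : EuclideanSpace ℝ (Fin N), exp (-‖v‖ ^ 2 / 2) = exp (-(1 / 2) * ‖v‖ ^ 2) :=
    fun v => by ring_nf
  simp_rw [gaussM, hexp]
  rw [integral_const_mul, GaussianFourier.integral_rexp_neg_mul_sq_norm (by norm_num),
    finrank_euclideanSpace_fin, div_div_eq_mul_div, div_one, mul_comm π, ← rpow_add (by positivity)]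
  ring_nf
  exact rpow_zero _

lemma integral_gaussM_sub (c : EuclideanSpace ℝ (Fin N)) : ∫ v, gaussM N (v - c) = 1 := by
  rw [integral_sub_right_eq_self, integral_gaussM]

lemma integrable_gaussM_sub (c : EuclideanSpace ℝ (Fin N)) :
    Integrable fun v => gaussM N (v - c) :=
  integrable_of_integral_eq_one (integral_gaussM_sub N c)

lemma gaussM_sub_sq_div_gaussM (a u : EuclideanSpace ℝ (Fin N)) :
    gaussM N (u - a) ^ 2 / gaussM N u = exp (‖a‖ ^ 2) * gaussM N (u - (2 : ℝ) • a) := by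
  rw [div_eq_iff (gaussM_pos N u).ne']
  have hexponent : -‖u - a‖ ^ 2 / 2 + -‖u - a‖ ^ 2 / 2
      = ‖a‖ ^ 2 + -‖u - (2 : ℝ) • a‖ ^ 2 / 2 + -‖u‖ ^ 2 / 2 := by
    rw [norm_sub_sq_real, norm_sub_sq_real, real_inner_smul_right, norm_smul]
    norm_num
    ring
  simp only [gaussM]
  rw [mul_pow, sq (exp _), ← exp_add, hexponent, exp_add, exp_add]
  ring

lemma gaussM_sub_chiSq_eq (w z v : EuclideanSpace ℝ (Fin N)) :
    (gaussM N (v - w) - gaussM N (v - z)) ^ 2 / gaussM N (v - z)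
      = exp (‖w - z‖ ^ 2) * gaussM N (v - ((2 : ℝ) • w - z)) - 2 * gaussM N (v - w)
        + gaussM N (v - z) := by
  have hsq := gaussM_sub_sq_div_gaussM N (w - z) (v - z)
  rw [sub_sub_sub_cancel_right, show v - z - (2 : ℝ) • (w - z) = v - ((2 : ℝ) • w - z) by module]
    at hsq
  rw [sq_sub_div_eq (gaussM_pos N _).ne', hsq]

lemma integrable_gaussM_sub_chiSq (w z : EuclideanSpace ℝ (Fin N)) :
    Integrable fun v => (gaussM N (v - w) - gaussM N (v - z)) ^ 2 / gaussM N (v - z) := by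
  simp_rw [gaussM_sub_chiSq_eq]
  exact (((integrable_gaussM_sub N _).const_mul _).sub
    ((integrable_gaussM_sub N w).const_mul 2)).add (integrable_gaussM_sub N z)

lemma integral_gaussM_sub_chiSq (w z : EuclideanSpace ℝ (Fin N)) :
    ∫ v, (gaussM N (v - w) - gaussM N (v - z)) ^ 2 / gaussM N (v - z)
      = exp (‖w - z‖ ^ 2) - 1 := by
  have hshift := (integrable_gaussM_sub N ((2 : ℝ) • w - z)).const_mul (exp (‖w - z‖ ^ 2))
  have hw := (integrable_gaussM_sub N w).const_mul 2
  simp_rw [gaussM_sub_chiSq_eq]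
  rw [integral_add _ (integrable_gaussM_sub N z), integral_sub hshift hw,
    integral_const_mul, integral_const_mul, integral_gaussM_sub, integral_gaussM_sub,
    integral_gaussM_sub]
  · ring
  · exact hshift.sub hw

end Maxwellian

theorem maxwellian_translate_diff_L1_general (N : ℕ)
    (w z : EuclideanSpace ℝ (Fin N)) :
    (∫ v : EuclideanSpace ℝ (Fin N), |gaussM N (v - w) - gaussM N (v - z)| ≤ 2) ∧
    (‖w - z‖ < 1 →
      ∫ v : EuclideanSpace ℝ (Fin N), |gaussM N (v - w) - gaussM N (v - z)|
        ≤ Real.sqrt (‖w - z‖ / (1 - ‖w - z‖))) := by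
  refine ⟨?_, fun hwz => ?_⟩
  · calc ∫ v, |gaussM N (v - w) - gaussM N (v - z)|
        ≤ (∫ v, gaussM N (v - w)) + ∫ v, gaussM N (v - z) :=
          integral_abs_sub_le_add (fun v => (gaussM_pos N _).le) (fun v => (gaussM_pos N _).le)
            (integrable_gaussM_sub N w) (integrable_gaussM_sub N z)
      _ = 2 := by rw [integral_gaussM_sub, integral_gaussM_sub]; norm_num
  · calc ∫ v, |gaussM N (v - w) - gaussM N (v - z)|
        ≤ √(∫ v, (gaussM N (v - w) - gaussM N (v - z)) ^ 2 / gaussM N (v - z)) :=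
          integral_abs_sub_le_sqrt_chiSq (.of_forall fun v => gaussM_pos N _)
            (integral_gaussM_sub N z) (integrable_gaussM_sub_chiSq N w z)
      _ = √(exp (‖w - z‖ ^ 2) - 1) := by rw [integral_gaussM_sub_chiSq]
      _ ≤ √(‖w - z‖ / (1 - ‖w - z‖)) :=
          sqrt_le_sqrt (exp_sq_sub_one_le_div_one_sub (norm_nonneg _) hwz)

/-- For every `N ≥ 1` and `w, z ∈ ℝ^N`:
(i) `‖M(· - w) - M(· - z)‖_{L¹} ≤ 2`, and
(ii) if `|w - z| < 1` then `‖M(· - w) - M(· - z)‖_{L¹} ≤ (|w - z| / (1 - |w - z|))^{1/2}`. -/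
theorem maxwellian_translate_diff_L1 (N : ℕ) (hN : 1 ≤ N)
    (w z : EuclideanSpace ℝ (Fin N)) :
    (∫ v : EuclideanSpace ℝ (Fin N), |gaussM N (v - w) - gaussM N (v - z)| ≤ 2) ∧
    (‖w - z‖ < 1 →
      ∫ v : EuclideanSpace ℝ (Fin N), |gaussM N (v - w) - gaussM N (v - z)|
        ≤ Real.sqrt (‖w - z‖ / (1 - ‖w - z‖))) :=
  maxwellian_translate_diff_L1_general N w z
end

section
/- Fokker–Planck moment formulas (Lemma 5.1, FP case): let N ≥ 1, let E : [0,∞) → ℝ^N be continuous and bounded, let t ≥ 0, and let f ∈ L¹(ℝ^N) with ∫ |v| |f(v)| dv < ∞. Define f_t(v) = e^{Nt} ∫_{ℝ^N} f( e^{t} v − ∫_0^t e^{σ} E(σ) dσ + (e^{2t} − 1)^{1/2} w ) M(w) dw. Then f_t ∈ L¹(ℝ^N), ρ(f_t) = ρ(f), and J(f_t) = e^{-t} J(f) + ρ(f) ∫_0^t e^{-(t-σ)} E(σ) dσ. -/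
open MeasureTheory

section TranslationMixture

variable {V W : Type*} [MeasurableSpace V] [AddGroup V] [MeasurableAdd₂ V]
  {μ : Measure V} [μ.IsAddRightInvariant] [SFinite μ]
  [MeasurableSpace W] {ν : Measure W} [SFinite ν]
  {p : W → ℝ} {g : V → ℝ} {d : W → V}

lemma integrable_prod_mul_comp_add (hp : Integrable p ν) (hg : Integrable g μ)
    (hd : Measurable d) :
    Integrable (fun z : W × V => p z.1 * g (z.2 + d z.1)) (ν.prod μ) := by
  have shear : MeasurePreserving (fun z : W × V => (z.1, z.2 + d z.1)) (ν.prod μ) (ν.prod μ) :=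
    (MeasurePreserving.id ν).skew_product (g := fun w v => v + d w)
      (measurable_snd.add (hd.comp measurable_fst))
      (Filter.Eventually.of_forall fun w => map_add_right_eq_self μ (d w))
  exact (shear.integrable_comp (hp.mul_prod hg).aestronglyMeasurable).mpr (hp.mul_prod hg)

lemma integrable_integral_mul_comp_add (hp : Integrable p ν) (hg : Integrable g μ)
    (hd : Measurable d) :
    Integrable (fun v => ∫ w, p w * g (v + d w) ∂ν) μ :=
  (integrable_prod_mul_comp_add hp hg hd).integral_prod_right

lemma integral_integral_mul_comp_add (hp : Integrable p ν) (hg : Integrable g μ)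
    (hd : Measurable d) :
    ∫ v, ∫ w, p w * g (v + d w) ∂ν ∂μ = (∫ w, p w ∂ν) * ∫ v, g v ∂μ := by
  have hF := integrable_prod_mul_comp_add hp hg hd
  calc ∫ v, ∫ w, p w * g (v + d w) ∂ν ∂μ
      = ∫ w, ∫ v, p w * g (v + d w) ∂μ ∂ν := by
        rw [← integral_prod_symm _ hF, integral_prod _ hF]
    _ = ∫ w, p w * ∫ v, g v ∂μ ∂ν := by
        simp only [integral_const_mul, integral_add_right_eq_self]
    _ = (∫ w, p w ∂ν) * ∫ v, g v ∂μ := integral_mul_const _ _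

lemma integral_map_mul_integral_mul_comp_add {F : Type*} [FunLike F V ℝ]
    [AddMonoidHomClass F V ℝ] (ℓ : F) (hp : Integrable p ν) (hg : Integrable g μ)
    (hℓg : Integrable (fun v => ℓ v * g v) μ) (hℓp : Integrable (fun w => ℓ (d w) * p w) ν)
    (hd : Measurable d) :
    ∫ v, ℓ v * ∫ w, p w * g (v + d w) ∂ν ∂μ
      = (∫ w, p w ∂ν) * (∫ v, ℓ v * g v ∂μ) - (∫ w, ℓ (d w) * p w ∂ν) * ∫ v, g v ∂μ := by
  have hsplit : ∀ᵐ v ∂μ, ℓ v * ∫ w, p w * g (v + d w) ∂ν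
      = (∫ w, p w * (ℓ (v + d w) * g (v + d w)) ∂ν) - ∫ w, ℓ (d w) * p w * g (v + d w) ∂ν := by
    filter_upwards [(integrable_prod_mul_comp_add hp hℓg hd).prod_left_ae,
      (integrable_prod_mul_comp_add hℓp hg hd).prod_left_ae] with v h₁ h₂
    rw [← integral_sub h₁ h₂, ← integral_const_mul]
    congr 1 with w
    rw [map_add]; ring
  rw [integral_congr_ae hsplit, integral_sub (integrable_integral_mul_comp_add hp hℓg hd)
    (integrable_integral_mul_comp_add hℓp hg hd), integral_integral_mul_comp_add hp hℓg hd,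
    integral_integral_mul_comp_add hℓp hg hd]

end TranslationMixture

lemma smul_add_eq_smul_add_inv_smul {K V : Type*} [DivisionRing K] [AddCommGroup V] [Module K V]
    {a : K} (ha : a ≠ 0) (v x : V) : a • v + x = a • (v + a⁻¹ • x) := by
  rw [smul_add, smul_inv_smul₀ ha]

section ScaledMixture

variable {V W : Type*} [NormedAddCommGroup V] [NormedSpace ℝ V] [FiniteDimensional ℝ V]
  [MeasurableSpace V] [BorelSpace V] {μ : Measure V} [μ.IsAddHaarMeasure]
  [MeasurableSpace W] {ν : Measure W} [SFinite ν]
  {p : W → ℝ} {g : V → ℝ} {d : W → V} {a : ℝ}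

lemma integrable_integral_mul_comp_smul_add (ha : a ≠ 0) (hp : Integrable p ν)
    (hg : Integrable g μ) (hd : Measurable d) :
    Integrable (fun v => ∫ w, p w * g (a • v + d w) ∂ν) μ := by
  simp only [smul_add_eq_smul_add_inv_smul ha]
  exact integrable_integral_mul_comp_add (d := fun w => a⁻¹ • d w) hp (hg.comp_smul ha)
    (hd.const_smul a⁻¹)

lemma integral_integral_mul_comp_smul_add (ha : a ≠ 0) (hp : Integrable p ν)
    (hg : Integrable g μ) (hd : Measurable d) :
    ∫ v, ∫ w, p w * g (a • v + d w) ∂ν ∂μ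
      = |(a ^ Module.finrank ℝ V)⁻¹| * ((∫ w, p w ∂ν) * ∫ v, g v ∂μ) := by
  simp only [smul_add_eq_smul_add_inv_smul ha]
  rw [integral_integral_mul_comp_add (d := fun w => a⁻¹ • d w) hp (hg.comp_smul ha)
    (hd.const_smul a⁻¹), Measure.integral_comp_smul, smul_eq_mul]
  ring

lemma integral_clm_mul_integral_mul_comp_smul_add (ℓ : V →L[ℝ] ℝ) (ha : a ≠ 0)
    (hp : Integrable p ν) (hg : Integrable g μ) (hℓg : Integrable (fun v => ℓ v * g v) μ)
    (hℓp : Integrable (fun w => ℓ (d w) * p w) ν) (hd : Measurable d) :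
    ∫ v, ℓ v * ∫ w, p w * g (a • v + d w) ∂ν ∂μ
      = |(a ^ Module.finrank ℝ V)⁻¹| * a⁻¹
        * ((∫ w, p w ∂ν) * (∫ v, ℓ v * g v ∂μ) - (∫ w, ℓ (d w) * p w ∂ν) * ∫ v, g v ∂μ) := by
  have hscale : (fun v => ℓ v * g (a • v)) = fun v => a⁻¹ * (ℓ (a • v) * g (a • v)) := by
    ext v; rw [map_smul, smul_eq_mul]; field_simp
  have hℓpa : (fun w => ℓ (a⁻¹ • d w) * p w) = fun w => a⁻¹ * (ℓ (d w) * p w) := by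
    ext w; rw [map_smul, smul_eq_mul, mul_assoc]
  have hℓga : Integrable (fun v => ℓ v * g (a • v)) μ := by
    rw [hscale]; exact (hℓg.const_mul a⁻¹).comp_smul ha
  simp only [smul_add_eq_smul_add_inv_smul ha]
  rw [integral_map_mul_integral_mul_comp_add (d := fun w => a⁻¹ • d w) ℓ hp (hg.comp_smul ha)
      hℓga (by rw [hℓpa]; exact hℓp.const_mul a⁻¹) (hd.const_smul a⁻¹), hscale, hℓpa,
    integral_const_mul, integral_const_mul,
    Measure.integral_comp_smul μ (fun v => ℓ v * g v), Measure.integral_comp_smul μ g,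
    smul_eq_mul, smul_eq_mul]
  ring

end ScaledMixture

lemma integrable_exp_neg_mul_sq_norm {V : Type*} [NormedAddCommGroup V] [InnerProductSpace ℝ V]
    [FiniteDimensional ℝ V] [MeasurableSpace V] [BorelSpace V] {b : ℝ} (hb : 0 < b) :
    Integrable (fun v : V => Real.exp (-b * ‖v‖ ^ 2)) := by
  refine Integrable.of_integral_ne_zero ?_
  rw [GaussianFourier.integral_rexp_neg_mul_sq_norm hb]
  positivity

lemma MeasureTheory.Integrable.clm_mul_of_norm_mul {V : Type*} [NormedAddCommGroup V]
    [NormedSpace ℝ V] [MeasurableSpace V] [OpensMeasurableSpace V] {μ : Measure V} {f : V → ℝ}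
    (hf : Integrable f μ) (hf1 : Integrable (fun v => ‖v‖ * |f v|) μ) (ℓ : V →L[ℝ] ℝ) :
    Integrable (fun v => ℓ v * f v) μ := by
  refine (hf1.const_mul ‖ℓ‖).mono' (ℓ.continuous.aestronglyMeasurable.mul hf.1)
    (.of_forall fun v => ?_)
  rw [norm_mul, Real.norm_eq_abs (f v), ← mul_assoc]
  exact mul_le_mul_of_nonneg_right (ℓ.le_opNorm v) (abs_nonneg _)

namespace gaussM

variable {N : ℕ}

@[fun_prop]
lemma continuous : Continuous (gaussM N) := by
  unfold gaussM; fun_prop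

lemma nonneg (v : EuclideanSpace ℝ (Fin N)) : 0 ≤ gaussM N v := by
  unfold gaussM; positivity

lemma neg (v : EuclideanSpace ℝ (Fin N)) : gaussM N (-v) = gaussM N v := by
  simp [gaussM]

lemma eq_const_mul_exp : gaussM N
    = fun v => (2 * Real.pi) ^ (-(N : ℝ) / 2) * Real.exp (-(1 / 2) * ‖v‖ ^ 2) := by
  ext v; unfold gaussM; ring_nf

lemma integrable : Integrable (gaussM N) := by
  rw [eq_const_mul_exp]
  exact (integrable_exp_neg_mul_sq_norm (by norm_num)).const_mul _

lemma integral_eq_one : ∫ v, gaussM N v = 1 := by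
  rw [eq_const_mul_exp, integral_const_mul,
    GaussianFourier.integral_rexp_neg_mul_sq_norm (by norm_num), finrank_euclideanSpace_fin,
    show Real.pi / (1 / 2) = 2 * Real.pi by ring, ← Real.rpow_add (by positivity), neg_div,
    neg_add_cancel, Real.rpow_zero]

lemma integrable_norm_mul : Integrable (fun v => ‖v‖ * gaussM N v) := by
  refine ((integrable_exp_neg_mul_sq_norm (by norm_num : (0:ℝ) < 1 / 4)).const_mul
    ((2 * Real.pi) ^ (-(N : ℝ) / 2))).mono' (by fun_prop) (.of_forall fun v => ?_)
  have hnorm : ‖v‖ ≤ Real.exp (‖v‖ ^ 2 / 4) := by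
    nlinarith [sq_nonneg (‖v‖ / 2 - 1), Real.add_one_le_exp (‖v‖ ^ 2 / 4)]
  rw [Real.norm_of_nonneg (by positivity [nonneg v]), eq_const_mul_exp, mul_left_comm]
  gcongr
  calc ‖v‖ * Real.exp (-(1 / 2) * ‖v‖ ^ 2)
      ≤ Real.exp (‖v‖ ^ 2 / 4) * Real.exp (-(1 / 2) * ‖v‖ ^ 2) := by gcongr
    _ = Real.exp (-(1 / 4) * ‖v‖ ^ 2) := by rw [← Real.exp_add]; ring_nf

lemma integrable_clm_mul (ℓ : EuclideanSpace ℝ (Fin N) →L[ℝ] ℝ) :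
    Integrable (fun v => ℓ v * gaussM N v) :=
  integrable.clm_mul_of_norm_mul
    (by simpa only [abs_of_nonneg (nonneg _)] using integrable_norm_mul) ℓ

lemma integral_clm_mul (ℓ : EuclideanSpace ℝ (Fin N) →L[ℝ] ℝ) :
    ∫ v, ℓ v * gaussM N v = 0 := by
  have hodd := integral_neg_eq_self (fun v => ℓ v * gaussM N v) volume
  simp only [map_neg, neg, neg_mul, integral_neg] at hodd
  linarith

lemma integrable_clm_smul_sub_mul (ℓ : EuclideanSpace ℝ (Fin N) →L[ℝ] ℝ) (s : ℝ)
    (c : EuclideanSpace ℝ (Fin N)) : Integrable (fun w => ℓ (s • w - c) * gaussM N w) := by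
  simp only [map_sub, map_smul, smul_eq_mul, sub_mul, mul_assoc]
  exact ((integrable_clm_mul ℓ).const_mul s).sub (integrable.const_mul (ℓ c))

lemma integral_clm_smul_sub_mul (ℓ : EuclideanSpace ℝ (Fin N) →L[ℝ] ℝ) (s : ℝ)
    (c : EuclideanSpace ℝ (Fin N)) : ∫ w, ℓ (s • w - c) * gaussM N w = -ℓ c := by
  simp only [map_sub, map_smul, smul_eq_mul, sub_mul, mul_assoc]
  rw [integral_sub ((integrable_clm_mul ℓ).const_mul s) (integrable.const_mul (ℓ c)),
    integral_const_mul, integral_const_mul, integral_clm_mul, integral_eq_one]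
  ring

end gaussM

lemma intervalIntegral_exp_neg_sub_mul_apply {ι : Type*} [Fintype ι] {E : ℝ → EuclideanSpace ℝ ι}
    {t : ℝ} (hE : IntervalIntegrable (fun σ => Real.exp σ • E σ) volume 0 t) (i : ι) :
    ∫ σ in (0:ℝ)..t, Real.exp (-(t - σ)) * E σ i
      = Real.exp (-t) * (∫ σ in (0:ℝ)..t, Real.exp σ • E σ) i := by
  have hcoord : (∫ σ in (0:ℝ)..t, Real.exp σ • E σ) i = ∫ σ in (0:ℝ)..t, Real.exp σ * E σ i :=
    ((EuclideanSpace.proj i).intervalIntegral_comp_comm hE).symm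
  rw [hcoord, ← intervalIntegral.integral_const_mul]
  congr 1 with σ
  rw [neg_sub, sub_eq_neg_add, Real.exp_add]; ring

theorem FP_moments_general (N : ℕ)
    (E : ℝ → EuclideanSpace ℝ (Fin N)) (hEc : Continuous E)
    (t : ℝ)
    (f : EuclideanSpace ℝ (Fin N) → ℝ) (hf : Integrable f)
    (hf1 : Integrable (fun v : EuclideanSpace ℝ (Fin N) => ‖v‖ * |f v|))
    (ft : EuclideanSpace ℝ (Fin N) → ℝ)
    (hft : ∀ v, ft v
      = Real.exp (N * t) * ∫ w : EuclideanSpace ℝ (Fin N),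
          f (Real.exp t • v - (∫ σ in (0:ℝ)..t, Real.exp σ • E σ)
              + Real.sqrt (Real.exp (2 * t) - 1) • w) * gaussM N w) :
    Integrable ft ∧
    ((∫ v : EuclideanSpace ℝ (Fin N), ft v) = ∫ v : EuclideanSpace ℝ (Fin N), f v) ∧
    (∀ i : Fin N, (∫ v : EuclideanSpace ℝ (Fin N), v i * ft v)
      = Real.exp (-t) * (∫ v : EuclideanSpace ℝ (Fin N), v i * f v)
        + (∫ v : EuclideanSpace ℝ (Fin N), f v)
          * ∫ σ in (0:ℝ)..t, Real.exp (-(t - σ)) * E σ i) := by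
  set a := Real.exp t
  set c := ∫ σ in (0:ℝ)..t, Real.exp σ • E σ
  set s := Real.sqrt (Real.exp (2 * t) - 1)
  have ha : a ≠ 0 := (Real.exp_pos t).ne'
  have hd : Measurable fun w : EuclideanSpace ℝ (Fin N) => s • w - c := by fun_prop
  have hft' : ft = fun v => a ^ N * ∫ w, gaussM N w * f (a • v + (s • w - c)) := by
    ext v
    rw [hft, Real.exp_nat_mul]
    congr 2 with w
    rw [mul_comm]
    congr 2
    abel
  have hscale : |(a ^ Module.finrank ℝ (EuclideanSpace ℝ (Fin N)))⁻¹| = (a ^ N)⁻¹ := by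
    rw [finrank_euclideanSpace_fin, abs_of_pos (by positivity)]
  refine ⟨?_, ?_, fun i => ?_⟩
  · rw [hft']
    exact (integrable_integral_mul_comp_smul_add ha gaussM.integrable hf hd).const_mul _
  · rw [hft', integral_const_mul, integral_integral_mul_comp_smul_add ha gaussM.integrable hf hd,
      hscale, gaussM.integral_eq_one]
    field_simp
  · have hmoment := integral_clm_mul_integral_mul_comp_smul_add (EuclideanSpace.proj i) ha
      gaussM.integrable hf (hf.clm_mul_of_norm_mul hf1 _)
      (gaussM.integrable_clm_smul_sub_mul _ s c) hd
    rw [hscale, gaussM.integral_eq_one, gaussM.integral_clm_smul_sub_mul] at hmoment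
    simp only [PiLp.proj_apply] at hmoment
    have hdrift := intervalIntegral_exp_neg_sub_mul_apply
      ((Real.continuous_exp.smul hEc).intervalIntegrable 0 t) i
    simp only [hft', mul_left_comm _ (a ^ N), integral_const_mul]
    rw [hmoment, hdrift, Real.exp_neg]
    field_simp
    ring

/-- Fokker–Planck moment formulas (Lemma 5.1, FP case): the Mehler-type solution `f_t`
of the kinetic Fokker–Planck equation driven by `E` is integrable, mass is conserved, and
`J(f_t) = e^{-t} J(f) + ρ(f) ∫_0^t e^{-(t-σ)} E(σ) dσ`. -/
theorem FP_moments (N : ℕ) (hN : 1 ≤ N)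
    (E : ℝ → EuclideanSpace ℝ (Fin N)) (hEc : Continuous E)
    (R : ℝ) (hEb : ∀ r, ‖E r‖ ≤ R)
    (t : ℝ) (ht : 0 ≤ t)
    (f : EuclideanSpace ℝ (Fin N) → ℝ) (hf : Integrable f)
    (hf1 : Integrable (fun v : EuclideanSpace ℝ (Fin N) => ‖v‖ * |f v|))
    (ft : EuclideanSpace ℝ (Fin N) → ℝ)
    (hft : ∀ v, ft v
      = Real.exp (N * t) * ∫ w : EuclideanSpace ℝ (Fin N),
          f (Real.exp t • v - (∫ σ in (0:ℝ)..t, Real.exp σ • E σ)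
              + Real.sqrt (Real.exp (2 * t) - 1) • w) * gaussM N w) :
    Integrable ft ∧
    ((∫ v : EuclideanSpace ℝ (Fin N), ft v) = ∫ v : EuclideanSpace ℝ (Fin N), f v) ∧
    (∀ i : Fin N, (∫ v : EuclideanSpace ℝ (Fin N), v i * ft v)
      = Real.exp (-t) * (∫ v : EuclideanSpace ℝ (Fin N), v i * f v)
        + (∫ v : EuclideanSpace ℝ (Fin N), f v)
          * ∫ σ in (0:ℝ)..t, Real.exp (-(t - σ)) * E σ i) :=
  FP_moments_general N E hEc t f hf hf1 ft hft
end

section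
/- Second moment of the linear-Boltzmann invariant solution: let N ≥ 1, R ≥ 0, and let Ē : (−∞, 0] → ℝ^N be measurable with |Ē(r)| ≤ R for all r. With M̄(v) = ∫_{−∞}^0 e^{σ} M( v − ∫_σ^0 Ē(r) dr ) dσ, one has ∫_{ℝ^N} v ⊗ v M̄(v) dv = Id_N + ∫_{−∞}^0 e^{σ} ( ∫_σ^0 Ē(r) dr ) ⊗ ( ∫_σ^0 Ē(r) dr ) dσ, where Id_N is the N×N identity matrix. -/
/-!
Writing `A σ = ∫_σ^0 Ē`, the function `M̄` is the mixture of the shifted Maxwellians `M(· - A σ)`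
under the probability measure `e^σ dσ` on `(-∞, 0]`. The Maxwellian factorises into
one-dimensional standard Gaussians, so `∫ v_i v_j M(v - a) dv = δ_ij + a_i a_j`, and Fubini
averages this identity over `σ`. Fubini applies because `∫ |v_i v_j| M(v - A σ) dv ≤ N + ‖A σ‖²`
and `‖A σ‖ ≤ R |σ|` is square integrable against `e^σ dσ`.
-/

open MeasureTheory

open ProbabilityTheory Real Set
open scoped NNReal

section GaussianReal

variable (μ : ℝ) {v : ℝ≥0}

lemma integrable_gaussianReal_iff_integrable_mul_gaussianPDFReal (hv : v ≠ 0) {f : ℝ → ℝ} :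
    Integrable f (gaussianReal μ v) ↔ Integrable (fun x => gaussianPDFReal μ v x * f x) := by
  rw [gaussianReal_of_var_ne_zero _ hv, integrable_withDensity_iff_integrable_smul'
    (measurable_gaussianPDF μ v) (ae_of_all _ fun _ => gaussianPDF_lt_top)]
  simp [toReal_gaussianPDF]

lemma integrable_pow_mul_gaussianPDFReal (hv : v ≠ 0) (n : ℕ) :
    Integrable fun x => x ^ n * gaussianPDFReal μ v x := by
  simp_rw [mul_comm _ (gaussianPDFReal μ v _)]
  rw [← integrable_gaussianReal_iff_integrable_mul_gaussianPDFReal μ hv]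
  exact ((memLp_id_gaussianReal n).integrable_norm_pow').mono' (by fun_prop)
    (ae_of_all _ fun x => by simp [norm_pow])

lemma integral_mul_gaussianPDFReal (hv : v ≠ 0) : ∫ x, x * gaussianPDFReal μ v x = μ := by
  simpa [integral_gaussianReal_eq_integral_smul hv, mul_comm] using
    integral_id_gaussianReal (μ := μ) (v := v)

lemma integral_sq_mul_gaussianPDFReal (hv : v ≠ 0) :
    ∫ x, x ^ 2 * gaussianPDFReal μ v x = v + μ ^ 2 := by
  have h := variance_eq_sub (memLp_id_gaussianReal (μ := μ) (v := v) 2)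
  simp only [variance_id_gaussianReal, id, Pi.pow_apply, integral_id_gaussianReal] at h
  rw [integral_gaussianReal_eq_integral_smul hv] at h
  simp_rw [smul_eq_mul, mul_comm (gaussianPDFReal μ v _)] at h
  linarith

end GaussianReal

section EuclideanSpace

variable {ι : Type*} [Fintype ι]

lemma integral_euclideanSpace_prod (f : ι → ℝ → ℝ) :
    ∫ v : EuclideanSpace ℝ ι, ∏ k, f k (v k) = ∏ k, ∫ t, f k t := by
  rw [← integral_fintype_prod_eq_prod, ← volume_pi,
    ← (EuclideanSpace.volume_preserving_symm_measurableEquiv_toLp ι).integral_comp']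
  rfl

lemma integrable_euclideanSpace_prod {f : ι → ℝ → ℝ} (hf : ∀ k, Integrable (f k)) :
    Integrable fun v : EuclideanSpace ℝ ι => ∏ k, f k (v k) :=
  ((EuclideanSpace.volume_preserving_symm_measurableEquiv_toLp ι).integrable_comp_emb
    (MeasurableEquiv.measurableEmbedding _)).2 (Integrable.fintype_prod hf)

lemma prod_pow_single_add_single [DecidableEq ι] (x : ι → ℝ) (i j : ι) :
    ∏ k, x k ^ (Pi.single i 1 + Pi.single j 1 : ι → ℕ) k = x i * x j := by
  simp only [Pi.add_apply, pow_add, Finset.prod_mul_distrib, Pi.single_apply, pow_ite, pow_one,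
    pow_zero, Finset.prod_ite_eq', Finset.mem_univ, if_true]

lemma abs_mul_apply_le_norm_sq (v : EuclideanSpace ℝ ι) (i j : ι) : |v i * v j| ≤ ‖v‖ ^ 2 := by
  rw [abs_mul, sq]
  exact mul_le_mul (PiLp.norm_apply_le v i) (PiLp.norm_apply_le v j) (abs_nonneg _) (norm_nonneg _)

end EuclideanSpace

section Maxwellian

variable {N : ℕ}

lemma gaussM_nonneg (v : EuclideanSpace ℝ (Fin N)) : 0 ≤ gaussM N v := by
  unfold gaussM
  positivity

lemma continuous_gaussM : Continuous (gaussM N) := by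
  unfold gaussM
  fun_prop

lemma gaussM_eq_prod (w : EuclideanSpace ℝ (Fin N)) :
    gaussM N w = ∏ k, gaussianPDFReal 0 1 (w k) := by
  simp only [gaussM, gaussianPDFReal, Finset.prod_mul_distrib, Finset.prod_const, Finset.card_univ,
    Fintype.card_fin, ← exp_sum, EuclideanSpace.real_norm_sq_eq, NNReal.coe_one, mul_one,
    sub_zero, ← Finset.sum_div, Finset.sum_neg_distrib, neg_div]
  congr 1
  rw [sqrt_eq_rpow, ← rpow_neg (by positivity), ← rpow_natCast, ← rpow_mul (by positivity)]
  ring_nf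

variable (a : EuclideanSpace ℝ (Fin N)) (i j : Fin N)

lemma mul_mul_gaussM_sub_eq_prod (v : EuclideanSpace ℝ (Fin N)) :
    v i * v j * gaussM N (v - a) = ∏ k,
      v k ^ (Pi.single i 1 + Pi.single j 1 : Fin N → ℕ) k * gaussianPDFReal (a k) 1 (v k) := by
  simp_rw [Finset.prod_mul_distrib, prod_pow_single_add_single, gaussM_eq_prod, PiLp.sub_apply,
    gaussianPDFReal_sub, zero_add]

lemma integrable_mul_mul_gaussM_sub :
    Integrable fun v : EuclideanSpace ℝ (Fin N) => v i * v j * gaussM N (v - a) := by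
  simp_rw [mul_mul_gaussM_sub_eq_prod]
  exact integrable_euclideanSpace_prod fun k => integrable_pow_mul_gaussianPDFReal _ one_ne_zero _

lemma integral_mul_mul_gaussM_sub :
    ∫ v, v i * v j * gaussM N (v - a) = (if i = j then 1 else 0) + a i * a j := by
  simp_rw [mul_mul_gaussM_sub_eq_prod]
  refine (integral_euclideanSpace_prod fun k t =>
    t ^ (Pi.single i 1 + Pi.single j 1 : Fin N → ℕ) k * gaussianPDFReal (a k) 1 t).trans ?_
  have h_other : ∀ k, k ≠ i → k ≠ j →
      ∫ t, t ^ (Pi.single i 1 + Pi.single j 1 : Fin N → ℕ) k * gaussianPDFReal (a k) 1 t = 1 := by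
    intro k hki hkj
    simp [hki, hkj, integral_gaussianPDFReal_eq_one]
  rcases eq_or_ne i j with rfl | hij
  · rw [Fintype.prod_eq_single i fun k hk => h_other k hk hk]
    simp only [Pi.add_apply, Pi.single_eq_same, one_add_one_eq_two,
      integral_sq_mul_gaussianPDFReal _ one_ne_zero]
    simp [sq]
  · rw [Fintype.prod_eq_mul i j hij fun k hk => h_other k hk.1 hk.2]
    simp [hij, hij.symm, integral_mul_gaussianPDFReal]

lemma norm_sq_mul_gaussM_sub_eq_sum (v : EuclideanSpace ℝ (Fin N)) :
    ‖v‖ ^ 2 * gaussM N (v - a) = ∑ k, v k * v k * gaussM N (v - a) := by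
  simp_rw [EuclideanSpace.real_norm_sq_eq, Finset.sum_mul, sq]

lemma integrable_norm_sq_mul_gaussM_sub :
    Integrable fun v : EuclideanSpace ℝ (Fin N) => ‖v‖ ^ 2 * gaussM N (v - a) := by
  simp_rw [norm_sq_mul_gaussM_sub_eq_sum]
  exact integrable_finsetSum _ fun k _ => integrable_mul_mul_gaussM_sub a k k

lemma integral_norm_sq_mul_gaussM_sub : ∫ v, ‖v‖ ^ 2 * gaussM N (v - a) = N + ‖a‖ ^ 2 := by
  simp_rw [norm_sq_mul_gaussM_sub_eq_sum]
  rw [integral_finsetSum _ fun k _ => integrable_mul_mul_gaussM_sub a k k,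
    EuclideanSpace.real_norm_sq_eq]
  simp [integral_mul_mul_gaussM_sub, Finset.sum_add_distrib, sq]

lemma integral_norm_mul_mul_gaussM_sub_le :
    ∫ v, ‖v i * v j * gaussM N (v - a)‖ ≤ N + ‖a‖ ^ 2 := by
  rw [← integral_norm_sq_mul_gaussM_sub a]
  refine integral_mono (integrable_mul_mul_gaussM_sub a i j).norm
    (integrable_norm_sq_mul_gaussM_sub a) fun v => ?_
  rw [norm_mul, Real.norm_eq_abs, Real.norm_of_nonneg (gaussM_nonneg _)]
  exact mul_le_mul_of_nonneg_right (abs_mul_apply_le_norm_sq v i j) (gaussM_nonneg _)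

end Maxwellian

section Mixture

variable {T : Type*} [MeasurableSpace T] {ρ : Measure T} [IsFiniteMeasure ρ] {N : ℕ}
  {A : T → EuclideanSpace ℝ (Fin N)}

lemma integrable_prod_mul_mul_gaussM_sub (hA : Measurable A)
    (hA2 : Integrable (fun t => ‖A t‖ ^ 2) ρ) (i j : Fin N) :
    Integrable (Function.uncurry fun t (v : EuclideanSpace ℝ (Fin N)) =>
      v i * v j * gaussM N (v - A t)) (ρ.prod volume) := by
  have hmeas : AEStronglyMeasurable (Function.uncurry fun t (v : EuclideanSpace ℝ (Fin N)) =>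
      v i * v j * gaussM N (v - A t)) (ρ.prod volume) := by
    have := continuous_gaussM (N := N)
    unfold Function.uncurry
    fun_prop
  refine (integrable_prod_iff hmeas).2
    ⟨ae_of_all _ fun t => integrable_mul_mul_gaussM_sub (A t) i j, ?_⟩
  refine ((integrable_const (N : ℝ)).add hA2).mono' hmeas.norm.integral_prod_right'
    (ae_of_all _ fun t => ?_)
  rw [Real.norm_of_nonneg (integral_nonneg fun _ => norm_nonneg _)]
  exact integral_norm_mul_mul_gaussM_sub_le (A t) i j

lemma integral_mul_mul_integral_gaussM_sub (hA : Measurable A)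
    (hA2 : Integrable (fun t => ‖A t‖ ^ 2) ρ) (i j : Fin N) :
    ∫ v, v i * v j * ∫ t, gaussM N (v - A t) ∂ρ
      = (if i = j then ρ.real univ else 0) + ∫ t, A t i * A t j ∂ρ := by
  have hAij : Integrable (fun t => A t i * A t j) ρ :=
    hA2.mono' (by fun_prop) (ae_of_all _ fun t => abs_mul_apply_le_norm_sq (A t) i j)
  calc ∫ v, v i * v j * ∫ t, gaussM N (v - A t) ∂ρ
      = ∫ v, ∫ t, v i * v j * gaussM N (v - A t) ∂ρ := by simp_rw [integral_const_mul]
    _ = ∫ t, (∫ v, v i * v j * gaussM N (v - A t)) ∂ρ :=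
        (integral_integral_swap (integrable_prod_mul_mul_gaussM_sub hA hA2 i j)).symm
    _ = ∫ t, ((if i = j then 1 else 0) + A t i * A t j) ∂ρ := by
        simp_rw [integral_mul_mul_gaussM_sub]
    _ = _ := by
        rw [integral_add (integrable_const _) hAij, integral_const, smul_eq_mul]
        split_ifs <;> simp

end Mixture

lemma continuous_intervalIntegral_of_norm_le {F : Type*} [NormedAddCommGroup F] [NormedSpace ℝ F]
    {E : ℝ → F} {R : ℝ} (hE : AEStronglyMeasurable E) (hER : ∀ r, ‖E r‖ ≤ R) (b : ℝ) :
    Continuous fun σ => ∫ r in σ..b, E r := by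
  simp_rw [intervalIntegral.integral_symm b]
  exact (intervalIntegral.continuous_primitive (fun _ _ => IntervalIntegrable.mono_fun'
    intervalIntegrable_const hE.restrict (ae_of_all _ hER)) b).neg

section ExpWeight

lemma integrableOn_exp_mul_pow_Iic (n : ℕ) : IntegrableOn (fun σ => exp σ * σ ^ n) (Iic 0) := by
  rw [← (Measure.measurePreserving_neg (volume : Measure ℝ)).integrableOn_comp_preimage
      (Homeomorph.neg ℝ).measurableEmbedding]
  simp only [Function.comp_def, neg_preimage, neg_Iic, neg_zero]
  rw [integrableOn_Ici_iff_integrableOn_Ioi]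
  refine IntegrableOn.congr_fun (Integrable.const_mul (GammaIntegral_convergent (s := n + 1)
    (by positivity)) ((-1) ^ n)) (fun x _ => ?_) measurableSet_Ioi
  simp only [add_sub_cancel_right, rpow_natCast, neg_pow x]
  ring

noncomputable def expWeight : Measure ℝ :=
  (volume.restrict (Iic 0)).withDensity fun σ => ENNReal.ofReal (exp σ)

instance : IsFiniteMeasure expWeight :=
  isFiniteMeasure_withDensity_ofReal (integrableOn_exp_Iic 0).2

variable {F : Type*} [NormedAddCommGroup F] [NormedSpace ℝ F]

lemma integral_expWeight (g : ℝ → F) : ∫ σ, g σ ∂expWeight = ∫ σ in Iic 0, exp σ • g σ := by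
  rw [expWeight, integral_withDensity_eq_integral_toReal_smul (by fun_prop)
    (ae_of_all _ fun _ => ENNReal.ofReal_lt_top)]
  simp_rw [ENNReal.toReal_ofReal (exp_pos _).le]

lemma integrable_expWeight_iff {g : ℝ → F} :
    Integrable g expWeight ↔ IntegrableOn (fun σ => exp σ • g σ) (Iic 0) := by
  rw [expWeight, integrable_withDensity_iff_integrable_smul' (by fun_prop)
    (ae_of_all _ fun _ => ENNReal.ofReal_lt_top)]
  simp_rw [ENNReal.toReal_ofReal (exp_pos _).le, IntegrableOn]

lemma measureReal_univ_expWeight : expWeight.real univ = 1 := by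
  simpa [integral_exp_Iic_zero] using integral_expWeight fun _ => (1 : ℝ)

lemma integrable_norm_sq_intervalIntegral_expWeight {E : ℝ → F} {R : ℝ}
    (hE : AEStronglyMeasurable E) (hER : ∀ r, ‖E r‖ ≤ R) :
    Integrable (fun σ => ‖∫ r in σ..0, E r‖ ^ 2) expWeight := by
  have hA := continuous_intervalIntegral_of_norm_le hE hER 0
  rw [integrable_expWeight_iff]
  refine ((integrableOn_exp_mul_pow_Iic 2).const_mul (R ^ 2)).mono' (by fun_prop)
    (ae_of_all _ fun σ => ?_)
  have hAσ : ‖∫ r in σ..0, E r‖ ≤ R * |0 - σ| :=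
    intervalIntegral.norm_integral_le_of_norm_le_const fun r _ => hER r
  have hAσ2 : ‖∫ r in σ..0, E r‖ ^ 2 ≤ R ^ 2 * σ ^ 2 := by
    simpa [mul_pow] using pow_le_pow_left₀ (norm_nonneg _) hAσ 2
  rw [norm_smul, norm_pow, norm_norm, Real.norm_of_nonneg (exp_pos σ).le, mul_left_comm]
  exact mul_le_mul_of_nonneg_left hAσ2 (exp_pos σ).le

end ExpWeight

theorem LB_invariant_second_moment_general (N : ℕ) (R : ℝ) (hR : 0 ≤ R)
    (Ebar : ℝ → EuclideanSpace ℝ (Fin N)) (hEm : Measurable Ebar)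
    (hEb : ∀ r, r ≤ 0 → ‖Ebar r‖ ≤ R)
    (Mbar : EuclideanSpace ℝ (Fin N) → ℝ)
    (hMbar : ∀ v, Mbar v
      = ∫ σ in Set.Iic (0:ℝ), Real.exp σ * gaussM N (v - ∫ r in σ..(0:ℝ), Ebar r)) :
    ∀ i j : Fin N, (∫ v : EuclideanSpace ℝ (Fin N), v i * v j * Mbar v)
      = (if i = j then 1 else 0)
        + ∫ σ in Set.Iic (0:ℝ), Real.exp σ
            * ((∫ r in σ..(0:ℝ), Ebar r) i * (∫ r in σ..(0:ℝ), Ebar r) j) := by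
  intro i j
  -- `Ē` is only controlled on `(-∞, 0]`; cutting it off there makes `σ ↦ ∫_σ^0` continuous on `ℝ`
  -- without changing its values for `σ ≤ 0`.
  set E : ℝ → EuclideanSpace ℝ (Fin N) := (Iic 0).indicator Ebar
  have hE_meas : AEStronglyMeasurable E := (hEm.indicator measurableSet_Iic).aestronglyMeasurable
  have hE : ∀ r, ‖E r‖ ≤ R := fun r => by
    by_cases hr : r ≤ 0 <;> simp [E, hr, hEb, hR]
  set A : ℝ → EuclideanSpace ℝ (Fin N) := fun σ => ∫ r in σ..0, E r
  have hA_eq : ∀ σ ∈ Iic (0 : ℝ), ∫ r in σ..0, Ebar r = A σ := fun σ hσ =>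
    intervalIntegral.integral_congr fun r hr => by
      rw [uIcc_of_le hσ] at hr
      simp [E, hr.2]
  have hMbar_mix : ∀ v, Mbar v = ∫ σ, gaussM N (v - A σ) ∂expWeight := fun v => by
    rw [hMbar, integral_expWeight]
    exact setIntegral_congr_fun measurableSet_Iic fun σ hσ => by rw [hA_eq σ hσ, smul_eq_mul]
  simp_rw [hMbar_mix]
  rw [integral_mul_mul_integral_gaussM_sub
      (continuous_intervalIntegral_of_norm_le hE_meas hE 0).measurable
      (integrable_norm_sq_intervalIntegral_expWeight hE_meas hE),
    measureReal_univ_expWeight, integral_expWeight]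
  congr 1
  exact setIntegral_congr_fun measurableSet_Iic fun σ hσ => by rw [hA_eq σ hσ, smul_eq_mul]

/-- Second moment of the linear-Boltzmann invariant solution:
`∫ v ⊗ v M̄(v) dv = Id + ∫_{-∞}^0 e^σ (∫_σ^0 Ē) ⊗ (∫_σ^0 Ē) dσ` (componentwise). -/
theorem LB_invariant_second_moment (N : ℕ) (hN : 1 ≤ N) (R : ℝ) (hR : 0 ≤ R)
    (Ebar : ℝ → EuclideanSpace ℝ (Fin N)) (hEm : Measurable Ebar)
    (hEb : ∀ r, r ≤ 0 → ‖Ebar r‖ ≤ R)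
    (Mbar : EuclideanSpace ℝ (Fin N) → ℝ)
    (hMbar : ∀ v, Mbar v
      = ∫ σ in Set.Iic (0:ℝ), Real.exp σ * gaussM N (v - ∫ r in σ..(0:ℝ), Ebar r)) :
    ∀ i j : Fin N, (∫ v : EuclideanSpace ℝ (Fin N), v i * v j * Mbar v)
      = (if i = j then 1 else 0)
        + ∫ σ in Set.Iic (0:ℝ), Real.exp σ
            * ((∫ r in σ..(0:ℝ), Ebar r) i * (∫ r in σ..(0:ℝ), Ebar r) j) :=
  LB_invariant_second_moment_general N R hR Ebar hEm hEb Mbar hMbar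
end

section
/- Resolvent–covariance identity for stationary processes (Lemma 5.3): let (Ω, P) be a probability space, R ≥ 0, and let Ē : ℝ × Ω → ℝ^N be jointly measurable with |Ē(t, ω)| ≤ R for all t, ω. Assume wide-sense stationarity: there is a function Γ : ℝ → Matrix(N, N, ℝ) with E[Ē_i(s) Ē_j(σ)] = Γ_{ij}(s − σ) for all s, σ ∈ ℝ and all i, j. Then for every δ > 0, the random vector Y = ∫_{−∞}^0 e^{δσ} Ē(σ) dσ satisfies 2δ E[Y_i Y_j] = ∫_0^∞ e^{−δt} ( Γ_{ij}(t) + Γ_{ij}(−t) ) dt for all i, j; in particular the matrix ∫_0^∞ e^{−δt} ( Γ(t) + Γ(−t) ) dt is symmetric and positive semidefinite. -/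
/-!
With `φ(s) = e^{δs} 1_{s ≤ 0}`, each coordinate of `Y` is `∫ φ(s) Ē_i(s) ds`, so by Fubini
`E[Y_i Y_j] = ∬ φ(s) φ(σ) Γ_{ij}(s - σ) ds dσ`. The shear `(σ, t) ↦ (σ, σ + t)` preserves
Lebesgue measure on `ℝ²` and turns this into `∫ c(t) Γ_{ij}(-t) dt`, where the autocorrelation
`c(t) = ∫ φ(σ) φ(σ + t) dσ` equals `e^{-δ|t|} / (2δ)`; folding `(-∞, 0)` onto `(0, ∞)` gives the
identity. The matrix is then `2δ` times the Gram matrix of the `Y_i` in `L²(P)`.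
-/

open MeasureTheory Set Real
open scoped ENNReal

theorem integral_prod_mul_mul_comp_sub {G : Type*} [MeasurableSpace G] [AddCommGroup G]
    [MeasurableAdd₂ G] [MeasurableNeg G] (μ : Measure G) [SFinite μ] [μ.IsAddLeftInvariant]
    {φ ψ k : G → ℝ}
    (h : Integrable (fun p : G × G => φ p.1 * ψ p.2 * k (p.1 - p.2)) (μ.prod μ)) :
    ∫ p, φ p.1 * ψ p.2 * k (p.1 - p.2) ∂(μ.prod μ)
      = ∫ t, (∫ σ, φ σ * ψ (σ + t) ∂μ) * k (-t) ∂μ := by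
  have hshear : MeasurePreserving (MeasurableEquiv.shearAddRight G) (μ.prod μ) (μ.prod μ) :=
    measurePreserving_prod_add μ μ
  have hsheared := (hshear.integrable_comp_emb (MeasurableEquiv.measurableEmbedding _)).2 h
  refine (hshear.integral_comp' _).symm.trans ((integral_prod_symm _ hsheared).trans ?_)
  refine integral_congr_ae (ae_of_all _ fun t => ?_)
  simp [MeasurableEquiv.shearAddRight, integral_mul_const]

theorem integrable_exp_neg_mul_abs {δ : ℝ} (hδ : 0 < δ) :
    Integrable fun t : ℝ => exp (-(δ * |t|)) := by
  rw [← integrableOn_univ, ← Iic_union_Ioi (a := (0 : ℝ))]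
  refine (integrableOn_exp_mul_Iic hδ 0).congr_fun (fun t ht => ?_) measurableSet_Iic
    |>.union ((exp_neg_integrableOn_Ioi 0 hδ).congr_fun (fun t (ht : 0 < t) => ?_)
      measurableSet_Ioi)
  · rw [abs_of_nonpos ht, mul_neg, neg_neg]
  · simp only [abs_of_pos ht, neg_mul]

theorem integral_eq_integral_Ioi_add_comp_neg {E : Type*} [NormedAddCommGroup E]
    [NormedSpace ℝ E] {h : ℝ → E} (hh : Integrable h) :
    ∫ t, h t = ∫ t in Ioi 0, (h t + h (-t)) := by
  rw [integral_add hh.integrableOn hh.comp_neg.integrableOn, integral_comp_neg_Ioi, neg_zero,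
    add_comm, intervalIntegral.integral_Iic_add_Ioi hh.integrableOn hh.integrableOn]

section SecondMoments

variable {α Ω : Type*} [MeasurableSpace α] [MeasurableSpace Ω] {μ : Measure α}
  {P : Measure Ω} {f g : α → Ω → ℝ} {F H : α → ℝ}

theorem integrable_prod_mul_of_norm_le [IsFiniteMeasure P] (hf : Measurable (Function.uncurry f))
    (hg : Measurable (Function.uncurry g)) (hF : Integrable F μ) (hH : Integrable H μ)
    (hfF : ∀ s ω, ‖f s ω‖ ≤ F s) (hgH : ∀ s ω, ‖g s ω‖ ≤ H s) :
    Integrable (fun z : Ω × α × α => f z.2.1 z.1 * g z.2.2 z.1) (P.prod (μ.prod μ)) := by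
  refine ((integrable_const (1 : ℝ)).mul_prod (hF.mul_prod hH)).mono'
    ((hf.comp (measurable_snd.fst.prodMk measurable_fst)).mul
      (hg.comp (measurable_snd.snd.prodMk measurable_fst))).aestronglyMeasurable
    (ae_of_all _ fun z => ?_)
  rw [norm_mul, one_mul]
  exact mul_le_mul (hfF _ z.1) (hgH _ z.1) (norm_nonneg _) ((norm_nonneg _).trans (hfF _ z.1))

theorem integral_integral_mul_integral [SFinite μ] [IsFiniteMeasure P]
    (hf : Measurable (Function.uncurry f)) (hg : Measurable (Function.uncurry g))
    (hF : Integrable F μ) (hH : Integrable H μ)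
    (hfF : ∀ s ω, ‖f s ω‖ ≤ F s) (hgH : ∀ s ω, ‖g s ω‖ ≤ H s) :
    ∫ ω, (∫ s, f s ω ∂μ) * (∫ s, g s ω ∂μ) ∂P
      = ∫ p, ∫ ω, f p.1 ω * g p.2 ω ∂P ∂(μ.prod μ) := by
  simp_rw [← integral_prod_mul]
  exact integral_integral_swap (integrable_prod_mul_of_norm_le hf hg hF hH hfF hgH)

theorem memLp_integral_of_norm_le [SFinite μ] [IsFiniteMeasure P]
    (hf : Measurable (Function.uncurry f)) (hF : Integrable F μ) (hfF : ∀ s ω, ‖f s ω‖ ≤ F s)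
    (p : ℝ≥0∞) :
    MemLp (fun ω => ∫ s, f s ω ∂μ) p P :=
  .of_bound hf.stronglyMeasurable.integral_prod_left.aestronglyMeasurable (∫ s, F s ∂μ)
    (ae_of_all _ fun ω => norm_integral_le_of_norm_le hF (ae_of_all _ (hfF · ω)))

theorem posSemidef_integral_mul {ι : Type*} [Finite ι] {Y : ι → Ω → ℝ}
    (hY : ∀ i, MemLp (Y i) 2 P) :
    (Matrix.of fun i j => ∫ ω, Y i ω * Y j ω ∂P).PosSemidef := by
  have hgram : (Matrix.of fun i j => ∫ ω, Y i ω * Y j ω ∂P)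
      = Matrix.gram ℝ fun i => (hY i).toLp := by
    ext i j
    rw [Matrix.of_apply, Matrix.gram_apply, L2.inner_def]
    refine integral_congr_ae ?_
    filter_upwards [(hY i).coeFn_toLp, (hY j).coeFn_toLp] with ω hi hj
    simp [hi, hj, mul_comm]
  exact hgram ▸ Matrix.posSemidef_gram ℝ _

end SecondMoments

noncomputable def oneSidedExp (δ : ℝ) : ℝ → ℝ := (Iic 0).indicator fun s => exp (δ * s)

namespace oneSidedExp

variable {δ : ℝ}

theorem nonneg (δ s : ℝ) : 0 ≤ oneSidedExp δ s :=
  indicator_nonneg (fun _ _ => (exp_pos _).le) s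

theorem measurable (δ : ℝ) : Measurable (oneSidedExp δ) :=
  (measurable_exp.comp (measurable_id.const_mul δ)).indicator measurableSet_Iic

theorem integrable (hδ : 0 < δ) : Integrable (oneSidedExp δ) :=
  (integrableOn_exp_mul_Iic hδ 0).integrable_indicator measurableSet_Iic

theorem measurable_uncurry_mul {Ω : Type*} [MeasurableSpace Ω] {X : ℝ → Ω → ℝ}
    (hX : Measurable (Function.uncurry X)) (δ : ℝ) :
    Measurable (Function.uncurry fun s ω => oneSidedExp δ s * X s ω) :=
  ((measurable δ).comp measurable_fst).mul hX

theorem norm_mul_le {x R : ℝ} (hx : ‖x‖ ≤ R) (δ s : ℝ) :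
    ‖oneSidedExp δ s * x‖ ≤ oneSidedExp δ s * R := by
  rw [norm_mul, Real.norm_of_nonneg (nonneg δ s)]
  exact mul_le_mul_of_nonneg_left hx (nonneg δ s)

theorem integral_mul_shift (hδ : 0 < δ) (t : ℝ) :
    ∫ σ, oneSidedExp δ σ * oneSidedExp δ (σ + t) = exp (-(δ * |t|)) / (2 * δ) := by
  have hprod : (fun σ => oneSidedExp δ σ * oneSidedExp δ (σ + t))
      = (Iic (min 0 (-t))).indicator fun σ => exp (δ * t) * exp (2 * δ * σ) := by
    ext σ
    have hshift : σ ≤ -t ↔ σ + t ≤ 0 := le_neg_iff_add_nonpos_right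
    simp only [oneSidedExp, indicator, mem_Iic, le_min_iff, hshift]
    split_ifs <;> first | tauto | simp | (rw [← exp_add, ← exp_add]; ring_nf)
  rw [hprod, integral_indicator measurableSet_Iic, integral_const_mul,
    integral_exp_mul_Iic (by positivity), ← mul_div_assoc, ← exp_add]
  congr 2
  rcases le_total 0 t with ht | ht
  · rw [min_eq_right (by linarith), abs_of_nonneg ht]; ring
  · rw [min_eq_left (by linarith), abs_of_nonpos ht]; ring

theorem two_mul_integral_prod_mul_mul_comp_sub (hδ : 0 < δ) {G : ℝ → ℝ} (hG : Measurable G) {C : ℝ}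
    (hGC : ∀ t, ‖G t‖ ≤ C) :
    2 * δ * ∫ p : ℝ × ℝ, oneSidedExp δ p.1 * oneSidedExp δ p.2 * G (p.1 - p.2)
      = ∫ t in Ioi 0, exp (-(δ * t)) * (G t + G (-t)) := by
  have hint : Integrable fun p : ℝ × ℝ => oneSidedExp δ p.1 * oneSidedExp δ p.2 * G (p.1 - p.2) :=
    ((integrable hδ).mul_prod (integrable hδ) |>.mul_const C).mono'
      ((((measurable δ).comp measurable_fst).mul ((measurable δ).comp measurable_snd)).mul
        (hG.comp (measurable_fst.sub measurable_snd))).aestronglyMeasurable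
      (ae_of_all _ fun p => by
        rw [norm_mul, Real.norm_of_nonneg (mul_nonneg (nonneg δ _) (nonneg δ _))]
        exact mul_le_mul_of_nonneg_left (hGC _) (mul_nonneg (nonneg δ _) (nonneg δ _)))
  have hint' : Integrable fun t => exp (-(δ * |t|)) * G (-t) :=
    ((integrable_exp_neg_mul_abs hδ).mul_const C).mono'
      ((measurable_exp.comp (measurable_abs.const_mul δ).neg).mul
        (hG.comp measurable_neg)).aestronglyMeasurable
      (ae_of_all _ fun t => by
        rw [norm_mul, Real.norm_of_nonneg (exp_pos _).le]
        exact mul_le_mul_of_nonneg_left (hGC _) (exp_pos _).le)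
  rw [Measure.volume_eq_prod] at hint ⊢
  rw [integral_prod_mul_mul_comp_sub volume hint]
  simp_rw [integral_mul_shift hδ, div_mul_eq_mul_div, integral_div,
    integral_eq_integral_Ioi_add_comp_neg hint', mul_div_cancel₀ _ (by positivity : 2 * δ ≠ 0)]
  refine setIntegral_congr_fun measurableSet_Ioi fun t (ht : 0 < t) => ?_
  simp only [abs_neg, abs_of_pos ht, neg_neg]
  ring

theorem setIntegral_Iic_exp_smul_apply {ι : Type*} [Fintype ι]
    {e : ℝ → EuclideanSpace ℝ ι} (he : Measurable e) {R : ℝ} (heR : ∀ s, ‖e s‖ ≤ R)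
    (hδ : 0 < δ) (i : ι) :
    (∫ σ in Iic 0, exp (δ * σ) • e σ) i = ∫ s, oneSidedExp δ s * e s i := by
  have hind : ∫ σ in Iic 0, exp (δ * σ) • e σ = ∫ σ, oneSidedExp δ σ • e σ := by
    rw [← integral_indicator measurableSet_Iic]
    exact integral_congr_ae (ae_of_all _ fun σ => indicator_smul_apply_left _ _ _ σ)
  have hcoord : ∀ i, Integrable fun s => oneSidedExp δ s * e s i := fun i => by
    have hm : Measurable fun s => e s i := (EuclideanSpace.proj i).continuous.measurable.comp he
    exact ((integrable hδ).mul_const R).mono' ((measurable δ).mul hm).aestronglyMeasurable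
      (ae_of_all _ fun s => norm_mul_le ((PiLp.norm_apply_le _ i).trans (heR s)) δ s)
  rw [hind, eval_integral_piLp (f := fun σ => oneSidedExp δ σ • e σ) hcoord]
  rfl

theorem two_mul_integral_mul_of_stationary {Ω : Type*} [MeasurableSpace Ω] {P : Measure Ω}
    [IsProbabilityMeasure P] {X Z : ℝ → Ω → ℝ} (hX : Measurable (Function.uncurry X))
    (hZ : Measurable (Function.uncurry Z)) {R : ℝ} (hXR : ∀ s ω, ‖X s ω‖ ≤ R)
    (hZR : ∀ s ω, ‖Z s ω‖ ≤ R) {G : ℝ → ℝ} (hG : ∀ s σ, ∫ ω, X s ω * Z σ ω ∂P = G (s - σ))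
    (hδ : 0 < δ) :
    2 * δ * ∫ ω, (∫ s, oneSidedExp δ s * X s ω) * (∫ s, oneSidedExp δ s * Z s ω) ∂P
      = ∫ t in Ioi 0, exp (-(δ * t)) * (G t + G (-t)) := by
  have hG0 : G = fun t => ∫ ω, X t ω * Z 0 ω ∂P := funext fun t => by simpa using (hG t 0).symm
  have hGm : Measurable G := by
    rw [hG0]
    exact (hX.mul (hZ.comp (measurable_const.prodMk measurable_snd))).stronglyMeasurable
      |>.integral_prod_right'.measurable
  have hGR : ∀ t, ‖G t‖ ≤ R * R := fun t => by
    rw [hG0]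
    exact (norm_integral_le_of_norm_le_const (ae_of_all _ fun ω =>
      norm_mul_le_of_le (hXR t ω) (hZR 0 ω))).trans_eq (by simp)
  have hcov : ∀ p : ℝ × ℝ, ∫ ω, oneSidedExp δ p.1 * X p.1 ω * (oneSidedExp δ p.2 * Z p.2 ω) ∂P
      = oneSidedExp δ p.1 * oneSidedExp δ p.2 * G (p.1 - p.2) := fun p => by
    rw [← hG, ← integral_const_mul]
    congr with ω
    ring
  rw [integral_integral_mul_integral (measurable_uncurry_mul hX δ) (measurable_uncurry_mul hZ δ)
    ((integrable hδ).mul_const R) ((integrable hδ).mul_const R)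
    (fun s ω => norm_mul_le (hXR s ω) δ s) (fun s ω => norm_mul_le (hZR s ω) δ s),
    ← Measure.volume_eq_prod]
  simp_rw [hcov]
  exact two_mul_integral_prod_mul_mul_comp_sub hδ hGm hGR

end oneSidedExp

theorem resolvent_covariance_general {Ω : Type*} [MeasurableSpace Ω]
    (P : Measure Ω) [IsProbabilityMeasure P]
    (N : ℕ) (R : ℝ)
    (Ebar : ℝ → Ω → EuclideanSpace ℝ (Fin N))
    (hEm : Measurable fun p : ℝ × Ω => Ebar p.1 p.2)
    (hEb : ∀ t ω, ‖Ebar t ω‖ ≤ R)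
    (Γ : ℝ → Matrix (Fin N) (Fin N) ℝ)
    (hΓ : ∀ s σ : ℝ, ∀ i j : Fin N,
      (∫ ω, Ebar s ω i * Ebar σ ω j ∂P) = Γ (s - σ) i j)
    (δ : ℝ) (hδ : 0 < δ)
    (Y : Ω → EuclideanSpace ℝ (Fin N))
    (hY : ∀ ω, Y ω = ∫ σ in Set.Iic (0:ℝ), Real.exp (δ * σ) • Ebar σ ω) :
    (∀ i j : Fin N, 2 * δ * (∫ ω, Y ω i * Y ω j ∂P)
      = ∫ t in Set.Ioi (0:ℝ), Real.exp (-(δ * t)) * (Γ t i j + Γ (-t) i j)) ∧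
    (Matrix.of fun i j : Fin N =>
      ∫ t in Set.Ioi (0:ℝ), Real.exp (-(δ * t)) * (Γ t i j + Γ (-t) i j)).IsSymm ∧
    (Matrix.of fun i j : Fin N =>
      ∫ t in Set.Ioi (0:ℝ), Real.exp (-(δ * t)) * (Γ t i j + Γ (-t) i j)).PosSemidef := by
  have hEi : ∀ i, Measurable fun p : ℝ × Ω => Ebar p.1 p.2 i := fun i =>
    (EuclideanSpace.proj i).continuous.measurable.comp hEm
  have hEiR : ∀ i t ω, ‖Ebar t ω i‖ ≤ R := fun i t ω => (PiLp.norm_apply_le _ i).trans (hEb t ω)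
  have hYi : ∀ i, (fun ω => Y ω i) = fun ω => ∫ s, oneSidedExp δ s * Ebar s ω i :=
    fun i => funext fun ω => hY ω ▸ oneSidedExp.setIntegral_Iic_exp_smul_apply
      (hEm.comp (measurable_id.prodMk measurable_const)) (hEb · ω) hδ i
  have hmoment : ∀ i j, 2 * δ * ∫ ω, Y ω i * Y ω j ∂P
      = ∫ t in Ioi 0, exp (-(δ * t)) * (Γ t i j + Γ (-t) i j) := fun i j => by
    rw [show (fun ω => Y ω i * Y ω j) = _ from congrArg₂ (· * ·) (hYi i) (hYi j)]
    exact oneSidedExp.two_mul_integral_mul_of_stationary (hEi i) (hEi j) (hEiR i) (hEiR j)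
      (hΓ · · i j) hδ
  have hpsd : (Matrix.of fun i j => ∫ ω, Y ω i * Y ω j ∂P).PosSemidef :=
    posSemidef_integral_mul (Y := fun i ω => Y ω i) fun i => hYi i ▸
      memLp_integral_of_norm_le (oneSidedExp.measurable_uncurry_mul (hEi i) δ)
        ((oneSidedExp.integrable hδ).mul_const R)
        (fun s ω => oneSidedExp.norm_mul_le (hEiR i s ω) δ s) 2
  have hmatrix : (Matrix.of fun i j => ∫ t in Ioi 0, exp (-(δ * t)) * (Γ t i j + Γ (-t) i j))
      = (2 * δ) • Matrix.of fun i j => ∫ ω, Y ω i * Y ω j ∂P := by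
    ext i j
    simp [← hmoment]
  rw [hmatrix]
  exact ⟨hmoment, (Matrix.IsSymm.ext fun i j => by simp [mul_comm]).smul _,
    hpsd.smul (by positivity)⟩

/-- Resolvent–covariance identity for stationary processes (Lemma 5.3): if `Ē` is a bounded,
jointly measurable, wide-sense stationary `ℝ^N`-valued process with covariance `Γ`, then for
`δ > 0` the random vector `Y = ∫_{-∞}^0 e^{δσ} Ē(σ) dσ` satisfies
`2δ E[Y_i Y_j] = ∫_0^∞ e^{-δt} (Γ_{ij}(t) + Γ_{ij}(-t)) dt`; in particular this matrix is
symmetric and positive semidefinite. -/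
theorem resolvent_covariance {Ω : Type*} [MeasurableSpace Ω]
    (P : Measure Ω) [IsProbabilityMeasure P]
    (N : ℕ) (R : ℝ) (hR : 0 ≤ R)
    (Ebar : ℝ → Ω → EuclideanSpace ℝ (Fin N))
    (hEm : Measurable fun p : ℝ × Ω => Ebar p.1 p.2)
    (hEb : ∀ t ω, ‖Ebar t ω‖ ≤ R)
    (Γ : ℝ → Matrix (Fin N) (Fin N) ℝ)
    (hΓ : ∀ s σ : ℝ, ∀ i j : Fin N,
      (∫ ω, Ebar s ω i * Ebar σ ω j ∂P) = Γ (s - σ) i j)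
    (δ : ℝ) (hδ : 0 < δ)
    (Y : Ω → EuclideanSpace ℝ (Fin N))
    (hY : ∀ ω, Y ω = ∫ σ in Set.Iic (0:ℝ), Real.exp (δ * σ) • Ebar σ ω) :
    (∀ i j : Fin N, 2 * δ * (∫ ω, Y ω i * Y ω j ∂P)
      = ∫ t in Set.Ioi (0:ℝ), Real.exp (-(δ * t)) * (Γ t i j + Γ (-t) i j)) ∧
    (Matrix.of fun i j : Fin N =>
      ∫ t in Set.Ioi (0:ℝ), Real.exp (-(δ * t)) * (Γ t i j + Γ (-t) i j)).IsSymm ∧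
    (Matrix.of fun i j : Fin N =>
      ∫ t in Set.Ioi (0:ℝ), Real.exp (-(δ * t)) * (Γ t i j + Γ (-t) i j)).PosSemidef :=
  resolvent_covariance_general P N R Ebar hEm hEb Γ hΓ δ hδ Y hY
end
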